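/- Let (V,h) be a real quadratic space of odd dimension and γ: Cl(V,h) → End_ℂ(S) an irreducible complex Clifford representation. Then the ℂ-linear extension γ_ℂ: ℂl(V,h) → End_ℂ(S) of γ restricts to an isomorphism of unital associative ℂ-algebras from the even subalgebra ℂl⁺(V,h) onto End_ℂ(S); in particular this restriction is injective and surjective. -/

import Mathlib

/-!
Choose an `h`-orthogonal basis `v₁, …, vₙ` of `V`. The elements `eᵢ = ι(vᵢ)` anticommute, square
to nonzero scalars and generate `ℂl(V,h)`, so the ordered monomials `e_s` (`s ⊆ {1, …, n}`) span
it and `e_s e_t` is a nonzero multiple of `e_{s ∆ t}`.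

Surjectivity: the image of `γ_ℂ` acts irreducibly on `S`, so it is all of `End_ℂ(S)` by Burnside's
theorem (Schur's lemma plus Jacobson density). Since `n` is odd, the volume element `ω = e₁ ⋯ eₙ`
is odd, central and squares to a nonzero scalar; by Schur `γ_ℂ(ω)` is a scalar, so an odd `b` has
the same image as a multiple of the even element `ω b`.

Injectivity: `ψ(x) = tr γ_ℂ(x) + tr γ_ℂ(π x)` is a `π`-invariant trace. It kills every monomial
`e_s` with `s ≠ ∅` (odd ones are negated by `π`, even ones are conjugated to their negative by any
`eᵢ` with `i ∈ s`), while `ψ(1) = 2 dim S ≠ 0`. Hence `(x, y) ↦ ψ(x y)` is nondegenerate, and an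
even `x` with `γ_ℂ(x) = 0` pairs to zero with everything.
-/

open scoped TensorProduct

noncomputable section

namespace CpxClifford

variable {V : Type*} [AddCommGroup V] [Module ℝ V]

/-- The complexified Clifford algebra `ℂl(V,h) = Cl(V,h) ⊗_ℝ ℂ` of a quadratic form. -/
abbrev CCl (Q : QuadraticForm ℝ V) : Type _ := ℂ ⊗[ℝ] CliffordAlgebra Q

variable (Q : QuadraticForm ℝ V)

/-- The canonical embedding of `V` into the complexified Clifford algebra. -/
def ιC : V →ₗ[ℝ] CCl Q :=
  (Algebra.TensorProduct.includeRight :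
      CliffordAlgebra Q →ₐ[ℝ] CCl Q).toLinearMap ∘ₗ CliffordAlgebra.ι Q

/-- The ℂ-linear extension `π_ℂ` of the parity (grade) involution. -/
def πC : CCl Q →ₐ[ℝ] CCl Q :=
  Algebra.TensorProduct.map (AlgHom.id ℝ ℂ) (CliffordAlgebra.involute)

/-- The ℂ-antilinear extension `τ_ℂ` of the reversion anti-automorphism:
`τ_ℂ(z ⊗ x) = conj z ⊗ τ(x)`. -/
def τC : CCl Q →ₗ[ℝ] CCl Q :=
  TensorProduct.map (Complex.conjAe : ℂ ≃ₐ[ℝ] ℂ).toLinearMap CliffordAlgebra.reverse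

/-- The twisted reversion `τ̃_ℂ = τ_ℂ ∘ π_ℂ`. -/
def τtC : CCl Q →ₗ[ℝ] CCl Q := τC Q ∘ₗ (πC Q).toLinearMap

/-- The twisted norm `N(x) = τ̃_ℂ(x) · x`. -/
def Nor (x : CCl Q) : CCl Q := τtC Q x * x

/-- The twisted adjoint action `Ad~(x)(y) = π_ℂ(x) · y · x⁻¹` of a unit `x`. -/
def Adt (x : (CCl Q)ˣ) (y : CCl Q) : CCl Q := πC Q ↑x * y * ↑x⁻¹

/-- Membership in the complex Clifford group `Γ(V,h)`:
the twisted adjoint action preserves (the image of) `V`. -/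
def memΓ (x : (CCl Q)ˣ) : Prop :=
  Adt Q x '' Set.range (ιC Q) = Set.range (ιC Q)

/-- Membership in the complex special Clifford group `Γˢ(V,h) = Γ(V,h) ∩ ℂl⁺(V,h)`:
the even elements of the complex Clifford group (even = fixed by the parity involution). -/
def memΓs (x : (CCl Q)ˣ) : Prop :=
  memΓ Q x ∧ πC Q ↑x = (↑x : CCl Q)

open Classical in
/-- The complex scalar `c` such that `x = c·1`, when it exists (`0` otherwise). -/
def scalarOf (x : CCl Q) : ℂ :=
  if h : ∃ c : ℂ, x = algebraMap ℂ (CCl Q) c then h.choose else 0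

/-- `|N(x)|`: the absolute value of the complex scalar `N(x)`. -/
def absN (x : CCl Q) : ℝ := ‖scalarOf Q (Nor Q x)‖

/-- Membership in `Pin^c(V,h) = {x ∈ Γ(V,h) : |N(x)| = 1}`. -/
def memPinc (x : (CCl Q)ˣ) : Prop := memΓ Q x ∧ absN Q ↑x = 1

/-- Membership in `Spin^c(V,h) = {x ∈ Γˢ(V,h) : |N(x)| = 1}`. -/
def memSpinc (x : (CCl Q)ˣ) : Prop := memΓs Q x ∧ absN Q ↑x = 1

/-- The normalization map `r(x) = |N(x)|^{-1/2} · x`. -/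
def rmap (x : CCl Q) : CCl Q := (Real.sqrt (absN Q x))⁻¹ • x

end CpxClifford

namespace CpxClifford

variable {V : Type*} [AddCommGroup V] [Module ℝ V]
variable {S : Type*} [AddCommGroup S] [Module ℝ S] [Module ℂ S] [IsScalarTower ℝ ℂ S]
variable (Q : QuadraticForm ℝ V)

/-- The image `γ(ι(V))` of `V` in `End_ℂ(S)` under a complex Clifford representation. -/
def gammaV (γ : CliffordAlgebra Q →ₐ[ℝ] Module.End ℂ S) : Set (Module.End ℂ S) :=
  Set.range fun v : V => γ (CliffordAlgebra.ι Q v)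

/-- A complex Clifford representation is weakly faithful if `v ↦ γ(ι(v))` is injective. -/
def WeaklyFaithful (γ : CliffordAlgebra Q →ₐ[ℝ] Module.End ℂ S) : Prop :=
  Function.Injective fun v : V => γ (CliffordAlgebra.ι Q v)

/-- Conjugation `A ↦ φ ∘ A ∘ φ⁻¹` by a ℂ-linear automorphism of `S`. -/
def conjMap (φ : S ≃ₗ[ℂ] S) (A : Module.End ℂ S) : Module.End ℂ S :=
  φ.toLinearMap ∘ₗ A ∘ₗ φ.symm.toLinearMap

/-- Membership in the complex Lipschitz group `L_γ`. -/
def memLip (γ : CliffordAlgebra Q →ₐ[ℝ] Module.End ℂ S) (φ : S ≃ₗ[ℂ] S) : Prop :=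
  conjMap φ '' gammaV Q γ = gammaV Q γ

/-- A complex Clifford representation is irreducible if the only invariant complex
subspaces of `S` are `0` and `S`. -/
def IsIrred (γ : CliffordAlgebra Q →ₐ[ℝ] Module.End ℂ S) : Prop :=
  ∀ W : Submodule ℂ S, (∀ (x : CliffordAlgebra Q), ∀ w ∈ W, γ x w ∈ W) → W = ⊥ ∨ W = ⊤

/-- The ℂ-linear extension `γ_ℂ : ℂl(V,h) → End_ℂ(S)` of a complex Clifford
representation `γ : Cl(V,h) → End_ℂ(S)`. -/
def γC (γ : CliffordAlgebra Q →ₐ[ℝ] Module.End ℂ S) : CCl Q →ₐ[ℂ] Module.End ℂ S :=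
  Algebra.TensorProduct.lift (Algebra.ofId ℂ (Module.End ℂ S)) γ
    (fun c x => by simpa [Algebra.ofId] using Algebra.commute_algebraMap_left c (γ x))

/-- The even part `ℂl⁺(V,h)`: the fixed-point set of the parity involution `π_ℂ`. -/
def evenSet : Set (CCl Q) := {x : CCl Q | πC Q x = x}

end CpxClifford

open Module
open scoped symmDiff

section Monomial

variable {ι A : Type*} [LinearOrder ι] [Ring A]

def cliffordMonomial (E : ι → A) (s : Finset ι) : A := (s.sort.map E).prod

variable (E : ι → A)

@[simp]
theorem cliffordMonomial_empty : cliffordMonomial E ∅ = 1 := by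
  simp [cliffordMonomial]

theorem cliffordMonomial_singleton (i : ι) : cliffordMonomial E {i} = E i := by
  simp [cliffordMonomial]

theorem cliffordMonomial_insert_of_lt {a : ι} {s : Finset ι} (ha : ∀ x ∈ s, a < x) :
    cliffordMonomial E (insert a s) = E a * cliffordMonomial E s := by
  rw [cliffordMonomial, Finset.sort_insert _ (fun x hx => (ha x hx).le)
    (fun h => lt_irrefl a (ha a h)), List.map_cons, List.prod_cons, cliffordMonomial]

theorem map_cliffordMonomial {F : Type*} [FunLike F A A] [MonoidHomClass F A A] (f : F)
    (hf : ∀ i, f (E i) = -E i) (s : Finset ι) :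
    f (cliffordMonomial E s) = (-1) ^ s.card * cliffordMonomial E s := by
  have hfE : ⇑f ∘ E = Neg.neg ∘ E := funext hf
  rw [cliffordMonomial, map_list_prod, List.map_map, hfE, ← List.map_map, List.prod_map_neg,
    List.length_map, Finset.length_sort]

theorem mul_cliffordMonomial_comm (hanti : Pairwise fun i j => E i * E j = -(E j * E i))
    (i : ι) (s : Finset ι) :
    E i * cliffordMonomial E s = (-1 : ℤ) ^ (s.erase i).card • (cliffordMonomial E s * E i) := by
  induction s using Finset.induction_on_min with
  | empty => simp
  | insert a s ha ih =>
    have has : a ∉ s := fun h => lt_irrefl a (ha a h)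
    rw [cliffordMonomial_insert_of_lt E ha, ← mul_assoc]
    rcases eq_or_ne a i with rfl | hai
    · rw [Finset.erase_eq_of_notMem has] at ih
      rw [Finset.erase_insert has]
      conv_lhs => rw [mul_assoc, ih, mul_smul_comm, ← mul_assoc]
    · rw [hanti hai.symm, Finset.erase_insert_of_ne hai,
        Finset.card_insert_of_notMem (fun h => has (Finset.mem_of_mem_erase h)), pow_succ',
        neg_mul, mul_assoc, ih, mul_smul_comm, neg_one_mul, neg_smul, mul_assoc]

theorem commute_cliffordMonomial_univ {K : Type*} [CommRing K] [Fintype ι] [Algebra K A]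
    (hanti : Pairwise fun i j => E i * E j = -(E j * E i))
    (hgen : Algebra.adjoin K (Set.range E) = ⊤) (hodd : Odd (Fintype.card ι)) (x : A) :
    Commute (cliffordMonomial E Finset.univ) x := by
  have hle : Algebra.adjoin K (Set.range E) ≤
      Subalgebra.centralizer K {cliffordMonomial E Finset.univ} := by
    refine Algebra.adjoin_le ?_
    rintro _ ⟨i, rfl⟩ _ rfl
    have heven : Even (Finset.univ.erase i).card := by
      rw [Finset.card_erase_of_mem (Finset.mem_univ i), Finset.card_univ]
      exact hodd.tsub_odd odd_one
    rw [mul_cliffordMonomial_comm E hanti, heven.neg_one_pow, one_smul]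
  rw [hgen, top_le_iff] at hle
  have hx : x ∈ Subalgebra.centralizer K {cliffordMonomial E Finset.univ} :=
    hle ▸ Algebra.mem_top
  exact (Subalgebra.mem_centralizer_iff K).1 hx _ rfl

end Monomial

/-- Abstracts the image of an orthogonal basis of a nondegenerate quadratic space in its
Clifford algebra. -/
structure IsCliffordFamily (K : Type*) {ι A : Type*} [CommRing K] [Ring A] [Algebra K A]
    (E : ι → A) : Prop where
  mul_self : ∀ i, ∃ u : Kˣ, E i * E i = algebraMap K A u
  anticomm : Pairwise fun i j => E i * E j = -(E j * E i)

namespace IsCliffordFamily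

section Monomial

variable {K ι A : Type*} [CommRing K] [LinearOrder ι] [Ring A] [Algebra K A] {E : ι → A}

theorem mul_cliffordMonomial (hE : IsCliffordFamily K E) (i : ι) (s : Finset ι) :
    ∃ u : Kˣ, E i * cliffordMonomial E s = u • cliffordMonomial E ({i} ∆ s) := by
  induction s using Finset.induction_on_min with
  | empty =>
    refine ⟨1, ?_⟩
    rw [← Finset.bot_eq_empty, symmDiff_bot, Finset.bot_eq_empty, cliffordMonomial_empty,
      one_smul, mul_one, cliffordMonomial_singleton]
  | insert a s ha ih =>
    have has : a ∉ s := fun h => lt_irrefl a (ha a h)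
    rw [cliffordMonomial_insert_of_lt E ha]
    rcases lt_trichotomy i a with hia | rfl | hai
    · have hi : ∀ x ∈ insert a s, i < x := by
        simpa using ⟨hia, fun x hx => hia.trans (ha x hx)⟩
      have hsd : {i} ∆ insert a s = insert i (insert a s) := by
        ext x; simp only [Finset.mem_symmDiff, Finset.mem_insert, Finset.mem_singleton]; grind
      refine ⟨1, ?_⟩
      rw [one_smul, hsd, cliffordMonomial_insert_of_lt E hi, cliffordMonomial_insert_of_lt E ha]
    · obtain ⟨u, hu⟩ := hE.mul_self i
      have hsd : {i} ∆ insert i s = s := by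
        ext x; simp only [Finset.mem_symmDiff, Finset.mem_insert, Finset.mem_singleton]; grind
      refine ⟨u, ?_⟩
      rw [← mul_assoc, hu, ← Algebra.smul_def, Units.smul_def, hsd]
    · obtain ⟨u, hu⟩ := ih
      have hsd : {i} ∆ insert a s = insert a ({i} ∆ s) := by
        ext x; simp only [Finset.mem_symmDiff, Finset.mem_insert, Finset.mem_singleton]; grind
      have ha' : ∀ x ∈ {i} ∆ s, a < x := by
        intro x hx
        rcases Finset.mem_symmDiff.1 hx with ⟨hx, -⟩ | ⟨hx, -⟩
        · exact Finset.mem_singleton.1 hx ▸ hai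
        · exact ha x hx
      refine ⟨-u, ?_⟩
      rw [← mul_assoc, hE.anticomm hai.ne', neg_mul, mul_assoc, hu, mul_smul_comm,
        ← cliffordMonomial_insert_of_lt E ha', hsd, Units.neg_smul]

theorem cliffordMonomial_mul_cliffordMonomial (hE : IsCliffordFamily K E) (s t : Finset ι) :
    ∃ u : Kˣ, cliffordMonomial E s * cliffordMonomial E t = u • cliffordMonomial E (s ∆ t) := by
  induction s using Finset.induction_on_min with
  | empty =>
    refine ⟨1, ?_⟩
    rw [cliffordMonomial_empty, one_mul, one_smul, ← Finset.bot_eq_empty, bot_symmDiff]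
  | insert a s ha ih =>
    have hsd : insert a s ∆ t = {a} ∆ (s ∆ t) := by
      rw [← symmDiff_assoc, Finset.insert_eq,
        Disjoint.symmDiff_eq_sup (Finset.disjoint_singleton_left.2 fun h => lt_irrefl a (ha a h))]
      rfl
    obtain ⟨u, hu⟩ := ih
    obtain ⟨v, hv⟩ := hE.mul_cliffordMonomial a (s ∆ t)
    refine ⟨u * v, ?_⟩
    rw [cliffordMonomial_insert_of_lt E ha, mul_assoc, hu, mul_smul_comm, hv, smul_smul, hsd]

theorem span_range_cliffordMonomial (hE : IsCliffordFamily K E)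
    (hgen : Algebra.adjoin K (Set.range E) = ⊤) :
    Submodule.span K (Set.range (cliffordMonomial E)) = ⊤ := by
  set M := Submodule.span K (Set.range (cliffordMonomial E))
  have hmul : ∀ x y, x ∈ M → y ∈ M → x * y ∈ M := by
    intro x y hx hy
    have hxy := Submodule.mul_mem_mul hx hy
    rw [Submodule.span_mul_span] at hxy
    refine Submodule.span_le.2 ?_ hxy
    rintro _ ⟨_, ⟨s, rfl⟩, _, ⟨t, rfl⟩, rfl⟩
    obtain ⟨u, hu⟩ := hE.cliffordMonomial_mul_cliffordMonomial s t
    change cliffordMonomial E s * cliffordMonomial E t ∈ M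
    rw [hu]
    exact Submodule.smul_of_tower_mem _ u (Submodule.subset_span ⟨_, rfl⟩)
  have hle : Algebra.adjoin K (Set.range E) ≤
      M.toSubalgebra (Submodule.subset_span ⟨∅, cliffordMonomial_empty E⟩) hmul :=
    Algebra.adjoin_le <| by
      rintro _ ⟨i, rfl⟩
      exact Submodule.subset_span ⟨{i}, cliffordMonomial_singleton E i⟩
  rw [hgen, top_le_iff] at hle
  exact eq_top_iff.2 fun x _ => Submodule.mem_toSubalgebra.1 (hle ▸ Algebra.mem_top)

end Monomial

section TraceForm

variable {K ι A : Type*} [Field K] [NeZero (2 : K)] [LinearOrder ι] [Ring A] [Algebra K A]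
  {E : ι → A}

theorem map_cliffordMonomial_eq_zero (hE : IsCliffordFamily K E)
    (ψ : A →ₗ[K] K) (hψ : ∀ x y, ψ (x * y) = ψ (y * x)) (π : A →ₐ[K] A)
    (hπE : ∀ i, π (E i) = -E i) (hψπ : ∀ x, ψ (π x) = ψ x) {s : Finset ι} (hs : s.Nonempty) :
    ψ (cliffordMonomial E s) = 0 := by
  set e := cliffordMonomial E s
  suffices h : ψ e = -ψ e by
    rw [eq_neg_iff_add_eq_zero, ← two_mul, mul_eq_zero] at h
    exact h.resolve_left two_ne_zero
  rcases Nat.even_or_odd s.card with heven | hodd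
  · obtain ⟨i, hi⟩ := hs
    obtain ⟨u, hu⟩ := hE.mul_self i
    have hodd : Odd (s.erase i).card := by
      rw [Finset.card_erase_of_mem hi]
      exact Nat.Even.sub_odd (Finset.card_pos.2 ⟨i, hi⟩) heven odd_one
    have hanti := mul_cliffordMonomial_comm E hE.anticomm i s
    rw [hodd.neg_one_pow, neg_one_zsmul] at hanti
    have hu' : (u : K) * ψ e = u * -ψ e := by
      calc (u : K) * ψ e = ψ (E i * E i * e) := by
            rw [hu, ← Algebra.smul_def, map_smul, smul_eq_mul]
        _ = ψ (E i * e * E i) := by rw [mul_assoc, hψ]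
        _ = -ψ (e * (E i * E i)) := by rw [hanti, neg_mul, map_neg, mul_assoc]
        _ = u * -ψ e := by
            rw [hu, ← Algebra.commutes, ← Algebra.smul_def, map_smul, smul_eq_mul, mul_neg]
    exact mul_left_cancel₀ u.ne_zero hu'
  · calc ψ e = ψ (π e) := (hψπ e).symm
      _ = -ψ e := by rw [map_cliffordMonomial E π hπE, hodd.neg_one_pow, neg_one_mul, map_neg]

theorem eq_zero_of_forall_map_mul_eq_zero [Fintype ι] (hE : IsCliffordFamily K E)
    (hgen : Algebra.adjoin K (Set.range E) = ⊤) (ψ : A →ₗ[K] K)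
    (hψ : ∀ x y, ψ (x * y) = ψ (y * x)) (π : A →ₐ[K] A) (hπE : ∀ i, π (E i) = -E i)
    (hψπ : ∀ x, ψ (π x) = ψ x) (hψ1 : ψ 1 ≠ 0) {x : A} (hx : ∀ y, ψ (x * y) = 0) : x = 0 := by
  have hmem : x ∈ Submodule.span K (Set.range (cliffordMonomial E)) := by
    rw [hE.span_range_cliffordMonomial hgen]; exact Submodule.mem_top
  obtain ⟨c, rfl⟩ := (Submodule.mem_span_range_iff_exists_fun K).1 hmem
  suffices hc : ∀ t, c t = 0 by simp [hc]
  intro t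
  obtain ⟨u, hu⟩ := hE.cliffordMonomial_mul_cliffordMonomial t t
  rw [symmDiff_self, Finset.bot_eq_empty, cliffordMonomial_empty] at hu
  -- only the `s = t` term survives, since `e_s e_t` is a multiple of `e_{s ∆ t}`
  have hcoeff : ψ ((∑ s, c s • cliffordMonomial E s) * cliffordMonomial E t) = c t * u * ψ 1 := by
    rw [Finset.sum_mul, map_sum, Finset.sum_eq_single t]
    · rw [smul_mul_assoc, hu, map_smul, Units.smul_def, map_smul, smul_eq_mul, smul_eq_mul,
        mul_assoc]
    · intro s _ hst
      obtain ⟨v, hv⟩ := hE.cliffordMonomial_mul_cliffordMonomial s t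
      have hne : (s ∆ t).Nonempty := by
        rw [Finset.nonempty_iff_ne_empty, ← Finset.bot_eq_empty, Ne, symmDiff_eq_bot]
        exact hst
      rw [smul_mul_assoc, hv, map_smul, Units.smul_def, map_smul,
        hE.map_cliffordMonomial_eq_zero ψ hψ π hπE hψπ hne, smul_zero, smul_zero]
    · simp
  have h0 := hx (cliffordMonomial E t)
  rw [hcoeff] at h0
  simpa [u.ne_zero, hψ1] using h0

end TraceForm

end IsCliffordFamily

theorem AlgHom.image_fixedPoints_eq_range {K A B : Type*} [Field K] [NeZero (2 : K)] [Ring A]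
    [Algebra K A] [Ring B] [Algebra K B] (f : A →ₐ[K] B) (π : A →ₐ[K] A)
    (hπ : Function.Involutive π) {ω : A} (hπω : π ω = -ω) {u : Kˣ}
    (hω : ω * ω = algebraMap K A u) {c : K} (hfω : f ω = algebraMap K B c) :
    f '' {x | π x = x} = Set.range f := by
  refine (Set.image_subset_range _ _).antisymm ?_
  rintro _ ⟨x, rfl⟩
  obtain ⟨a, b, ha, hb, rfl⟩ : ∃ a b, π a = a ∧ π b = -b ∧ x = a + b := by
    refine ⟨(2⁻¹ : K) • (x + π x), (2⁻¹ : K) • (x - π x), ?_, ?_, ?_⟩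
    · rw [map_smul, map_add, hπ x, add_comm]
    · rw [map_smul, map_sub, hπ x, ← smul_neg, neg_sub]
    · rw [← smul_add, add_add_sub_cancel, ← two_smul K, smul_smul, inv_mul_cancel₀ two_ne_zero,
        one_smul]
  have hb' : b = ((u⁻¹ : Kˣ) : K) • (ω * (ω * b)) := by
    rw [← mul_assoc, hω, ← Algebra.smul_def, smul_smul, ← Units.val_mul, inv_mul_cancel,
      Units.val_one, one_smul]
  refine ⟨a + (((u⁻¹ : Kˣ) : K) * c) • (ω * b), ?_, ?_⟩
  · change π _ = _
    rw [map_add, ha, map_smul, map_mul, hπω, hb, neg_mul_neg]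
  · rw [map_add, map_add]
    conv_rhs => rw [hb']
    simp only [map_smul, map_mul, hfω, ← Algebra.smul_def, smul_smul, mul_assoc]

section Burnside

variable {K S : Type*} [Field K] [IsAlgClosed K] [AddCommGroup S] [Module K S]
  [FiniteDimensional K S] (B : Subalgebra K (End K S)) [IsSimpleModule B S]

theorem Subalgebra.exists_algebraMap_eq_of_mem_centralizer {T : End K S}
    (hT : T ∈ Subalgebra.centralizer K (B : Set (End K S))) : ∃ c : K, algebraMap K _ c = T := by
  let T' : S →ₗ[B] S := { T with map_smul' := fun b s => (congr($(hT b b.2) s)).symm }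
  obtain ⟨c, hc⟩ :=
    (IsSimpleModule.algebraMap_end_bijective_of_isAlgClosed K (A := B) (V := S)).2 T'
  exact ⟨c, LinearMap.ext fun s => congr($hc s)⟩

theorem Subalgebra.eq_top_of_isSimpleModule : B = ⊤ := by
  have : Module.Finite (End B S) S := Module.Finite.of_restrictScalars_finite K _ _
  refine eq_top_iff.2 fun T _ => ?_
  -- by Schur every `B`-endomorphism is a scalar, so `T` commutes with all of them
  let T' : End (End B S) S :=
    { T with
      map_smul' := fun f s => by
        obtain ⟨c, rfl⟩ :=
          (IsSimpleModule.algebraMap_end_bijective_of_isAlgClosed K (A := B) (V := S)).2 f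
        exact map_smul T c s }
  obtain ⟨b, hb⟩ := Module.Finite.toModuleEnd_moduleEnd_surjective (R := B) (M := S) T'
  convert b.2
  exact LinearMap.ext fun s => (congr($hb s)).symm

end Burnside

namespace IsCliffordFamily

variable {K ι A S : Type*} [Field K] [LinearOrder ι] [Fintype ι] [Ring A] [Algebra K A]
  {E : ι → A} [AddCommGroup S] [Module K S] [FiniteDimensional K S]

theorem injOn_fixedPoints [CharZero K] [Nontrivial S] (hE : IsCliffordFamily K E)
    (hgen : Algebra.adjoin K (Set.range E) = ⊤) (f : A →ₐ[K] End K S) (π : A →ₐ[K] A)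
    (hπ : Function.Involutive π) (hπE : ∀ i, π (E i) = -E i) : Set.InjOn f {x | π x = x} := by
  -- `tr ∘ f` alone is degenerate (it does not vanish on the central volume element);
  -- symmetrizing it under `π` kills all odd monomials
  let ψ : A →ₗ[K] K :=
    LinearMap.trace K S ∘ₗ (f.toLinearMap + f.toLinearMap ∘ₗ π.toLinearMap)
  have hψ : ∀ x, ψ x = LinearMap.trace K S (f x) + LinearMap.trace K S (f (π x)) := fun x => by
    simp [ψ]
  intro x hx y hy hxy
  rw [← sub_eq_zero]
  refine hE.eq_zero_of_forall_map_mul_eq_zero hgen ψ (fun a b => ?_) π hπE (fun a => ?_) ?_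
    fun z => ?_
  · simp only [hψ, map_mul, LinearMap.trace_mul_comm K (f a), LinearMap.trace_mul_comm K (f (π a))]
  · rw [hψ, hψ, hπ a, add_comm]
  · rw [hψ, map_one π, map_one f, LinearMap.trace_one, ← two_mul]
    exact mul_ne_zero two_ne_zero (Nat.cast_ne_zero.2 Module.finrank_pos.ne')
  · have hπ0 : π (x - y) = x - y := by rw [map_sub, hx, hy]
    rw [hψ, map_mul π, hπ0, map_mul f, map_mul f, map_sub, hxy, sub_self, zero_mul, zero_mul,
      map_zero, add_zero]

theorem image_fixedPoints_eq_univ [IsAlgClosed K] [NeZero (2 : K)] (hE : IsCliffordFamily K E)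
    (hgen : Algebra.adjoin K (Set.range E) = ⊤) (hodd : Odd (Fintype.card ι))
    (f : A →ₐ[K] End K S) [IsSimpleModule f.range S] (π : A →ₐ[K] A)
    (hπ : Function.Involutive π) (hπE : ∀ i, π (E i) = -E i) :
    f '' {x | π x = x} = Set.univ := by
  set ω := cliffordMonomial E Finset.univ
  obtain ⟨c, hc⟩ := f.range.exists_algebraMap_eq_of_mem_centralizer (T := f ω) <| by
    rw [Subalgebra.mem_centralizer_iff]
    rintro _ ⟨y, rfl⟩
    change f y * f ω = f ω * f y
    rw [← map_mul, ← map_mul, (commute_cliffordMonomial_univ E hE.anticomm hgen hodd y).eq]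
  obtain ⟨u, hu⟩ := hE.cliffordMonomial_mul_cliffordMonomial Finset.univ Finset.univ
  rw [symmDiff_self, Finset.bot_eq_empty, cliffordMonomial_empty, Units.smul_def,
    ← Algebra.algebraMap_eq_smul_one] at hu
  have hπω : π ω = -ω := by
    rw [map_cliffordMonomial E π hπE, Finset.card_univ, hodd.neg_one_pow, neg_one_mul]
  rw [f.image_fixedPoints_eq_range π hπ hπω hu hc.symm, Set.range_eq_univ, ← AlgHom.range_eq_top]
  exact f.range.eq_top_of_isSimpleModule

end IsCliffordFamily

namespace CpxClifford

variable {V : Type*} [AddCommGroup V] [Module ℝ V] (Q : QuadraticForm ℝ V)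

/-- `πC` as a `ℂ`-algebra homomorphism; its underlying function is `πC Q` by definition. -/
def involuteℂ : CCl Q →ₐ[ℂ] CCl Q :=
  Algebra.TensorProduct.map (AlgHom.id ℂ ℂ) CliffordAlgebra.involute

theorem involuteℂ_involutive : Function.Involutive (involuteℂ Q) := by
  have h : (involuteℂ Q).comp (involuteℂ Q) = AlgHom.id ℂ (CCl Q) := by
    rw [involuteℂ, ← Algebra.TensorProduct.map_comp, AlgHom.comp_id,
      CliffordAlgebra.involute_comp_involute, Algebra.TensorProduct.map_id]
  exact fun x => congr($h x)

theorem involuteℂ_ιC (v : V) : involuteℂ Q (ιC Q v) = -ιC Q v := by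
  change Algebra.TensorProduct.map _ _ (1 ⊗ₜ _) = -(1 ⊗ₜ _)
  rw [Algebra.TensorProduct.map_tmul, CliffordAlgebra.involute_ι, TensorProduct.tmul_neg]
  rfl

theorem ιC_mul_ιC_add_swap (v w : V) :
    ιC Q v * ιC Q w + ιC Q w * ιC Q v = algebraMap ℝ (CCl Q) (QuadraticMap.polar Q v w) := by
  have h := congrArg (Algebra.TensorProduct.includeRight : CliffordAlgebra Q →ₐ[ℝ] CCl Q)
    (CliffordAlgebra.ι_mul_ι_add_swap v w)
  rwa [map_add, map_mul, map_mul, AlgHom.commutes] at h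

theorem ιC_mul_self (v : V) : ιC Q v * ιC Q v = algebraMap ℝ (CCl Q) (Q v) := by
  change Algebra.TensorProduct.includeRight _ * Algebra.TensorProduct.includeRight _ = _
  rw [← map_mul, CliffordAlgebra.ι_sq_scalar, AlgHom.commutes]

theorem adjoin_range_ιC_comp_basis {ι : Type*} (b : Basis ι ℝ V) :
    Algebra.adjoin ℂ (Set.range (ιC Q ∘ b)) = ⊤ := by
  have hgen : Algebra.adjoin ℝ (Set.range (CliffordAlgebra.ι Q ∘ b)) = ⊤ := by
    rw [eq_top_iff, ← CliffordAlgebra.adjoin_range_ι, Algebra.adjoin_le_iff]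
    rintro _ ⟨v, rfl⟩
    have hv : v ∈ Submodule.span ℝ (Set.range b) := b.span_eq ▸ Submodule.mem_top
    refine Algebra.span_le_adjoin ℝ _ ?_
    rw [Set.range_comp, ← Submodule.map_span]
    exact Submodule.mem_map_of_mem hv
  rw [← Algebra.TensorProduct.adjoin_one_tmul_image_eq_top _ hgen, ← Set.range_comp]
  rfl

theorem isCliffordFamily_ιC_comp_basis {ι : Type*} (h : LinearMap.BilinForm ℝ V)
    (hnd : h.Nondegenerate) (b : Basis ι ℝ V) (hb : h.IsOrthoᵢ b) :
    IsCliffordFamily ℂ (ιC h.toQuadraticMap ∘ b) where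
  mul_self i := by
    have hne : (h (b i) (b i) : ℂ) ≠ 0 := by
      exact_mod_cast hb.not_isOrtho_basis_self_of_separatingLeft hnd.1 i
    refine ⟨Units.mk0 _ hne, ?_⟩
    rw [Function.comp_apply, ιC_mul_self, LinearMap.BilinMap.toQuadraticMap_apply, Units.val_mk0,
      IsScalarTower.algebraMap_apply ℝ ℂ]
    rfl
  anticomm i j hij := by
    change ιC _ (b i) * ιC _ (b j) = -(ιC _ (b j) * ιC _ (b i))
    rw [eq_neg_iff_add_eq_zero, ιC_mul_ιC_add_swap, LinearMap.BilinMap.polar_toQuadraticMap,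
      hb hij, hb hij.symm, add_zero, map_zero]

variable {S : Type*} [AddCommGroup S] [Module ℝ S] [Module ℂ S] [IsScalarTower ℝ ℂ S]
  (γ : CliffordAlgebra Q →ₐ[ℝ] Module.End ℂ S)

theorem γC_one_tmul (x : CliffordAlgebra Q) : γC Q γ (1 ⊗ₜ x) = γ x := by
  simp [γC]

theorem isSimpleModule_range_γC [Nontrivial S] (hirr : IsIrred Q γ) :
    IsSimpleModule (γC Q γ).range S := by
  have : Nontrivial (Submodule (γC Q γ).range S) := (Submodule.nontrivial_iff _).2 inferInstance
  refine { eq_bot_or_eq_top := fun W => ?_ }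
  have hW := hirr (W.restrictScalars ℂ) fun x w hw =>
    W.smul_mem ⟨γ x, 1 ⊗ₜ x, γC_one_tmul Q γ x⟩ hw
  simpa only [Submodule.restrictScalars_eq_bot_iff, Submodule.restrictScalars_eq_top_iff] using hW

end CpxClifford

open CpxClifford in
/-- If `(V,h)` has odd dimension and `γ` is an irreducible complex Clifford
representation, then the ℂ-linear extension `γ_ℂ : ℂl(V,h) → End_ℂ(S)` restricts to an
isomorphism of unital associative ℂ-algebras from the even subalgebra `ℂl⁺(V,h)` onto
`End_ℂ(S)`: its restriction to the even part is injective and surjective. -/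
theorem complexified_rep_restricts_iso_even_part
    {V : Type*} [AddCommGroup V] [Module ℝ V] [FiniteDimensional ℝ V]
    {S : Type*} [AddCommGroup S] [Module ℝ S] [Module ℂ S] [IsScalarTower ℝ ℂ S]
    [FiniteDimensional ℂ S] [Nontrivial S]
    (h : LinearMap.BilinForm ℝ V) (hsymm : h.IsSymm) (hnd : h.Nondegenerate)
    (hodd : Module.finrank ℝ V % 2 = 1)
    (γ : CliffordAlgebra h.toQuadraticMap →ₐ[ℝ] Module.End ℂ S)
    (hirr : IsIrred h.toQuadraticMap γ) :
    Set.InjOn (γC h.toQuadraticMap γ) (evenSet h.toQuadraticMap) ∧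
    (γC h.toQuadraticMap γ) '' (evenSet h.toQuadraticMap) = Set.univ := by
  obtain ⟨b, hb⟩ := LinearMap.BilinForm.exists_orthogonal_basis
    (LinearMap.BilinForm.isSymm_iff.mp hsymm)
  have hE := isCliffordFamily_ιC_comp_basis h hnd b hb
  have hgen := adjoin_range_ιC_comp_basis h.toQuadraticMap b
  have hodd' : Odd (Fintype.card (Fin (Module.finrank ℝ V))) := by
    rw [Fintype.card_fin]; exact Nat.odd_iff.2 hodd
  have := isSimpleModule_range_γC h.toQuadraticMap γ hirr
  have hπ := involuteℂ_involutive h.toQuadraticMap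
  have hπE := fun i => involuteℂ_ιC h.toQuadraticMap (b i)
  exact ⟨hE.injOn_fixedPoints hgen _ _ hπ hπE, hE.image_fixedPoints_eq_univ hgen hodd' _ _ hπ hπE⟩
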